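/- Let R be a commutative Noetherian ring of prime characteristic p such that R_red is F-finite, let M be an R-module, and let 𝔭_1, …, 𝔭_n be the minimal primes of R. Then M_{*R} = Σ_{i=1}^n (0 :_M 𝔭_i)_{*(R/𝔭_i)}, where each (0 :_M 𝔭_i) = {x ∈ M : 𝔭_i·x = 0} is regarded as an (R/𝔭_i)-module, its tight interior over R/𝔭_i is viewed as a submodule of M, and the sum is taken inside M. -/

import Mathlib

open scoped TensorProduct Pointwise

universe u v w

/-- `R°`: the set of elements of `R` not contained in any minimal prime. -/
def RCirc (R : Type u) [CommRing R] : Set R :=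
  {c | ∀ P ∈ minimalPrimes R, c ∉ P}

/-- An additive map `g : M →+ N` between `R`-modules is `e`-th Frobenius semilinear if
`g (r ^ (p ^ e) • x) = r • g x`; these are exactly the `R`-linear maps `{}^e M → N`. -/
def IsFrobSemilinear (p e : ℕ) (R : Type u) [CommRing R] {M : Type v} {N : Type w}
    [AddCommGroup M] [Module R M] [AddCommGroup N] [Module R N] (g : M →+ N) : Prop :=
  ∀ (r : R) (x : M), g ((r ^ p ^ e) • x) = r • g x

/-- `M_*[c, p^{e₀}]`: the submodule generated by all `g ({}^e c)` for `e ≥ e₀` and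
`g ∈ Hom_R({}^e R, M)`. -/
def tiAux (p : ℕ) (R : Type u) [CommRing R] (M : Type v) [AddCommGroup M] [Module R M]
    (c : R) (e₀ : ℕ) : Submodule R M :=
  Submodule.span R {x : M | ∃ e : ℕ, e₀ ≤ e ∧ ∃ g : R →+ M, IsFrobSemilinear p e R g ∧ x = g c}

/-- The tight interior `M_{*R}`. -/
def tightInterior (p : ℕ) (R : Type u) [CommRing R] (M : Type v) [AddCommGroup M]
    [Module R M] : Submodule R M :=
  ⨅ c ∈ RCirc R, ⨅ e₀ : ℕ, tiAux p R M c e₀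

/-- `R` is `F`-finite: `{}^1 R` is a finitely generated `R`-module. -/
def FFinite (p : ℕ) (R : Type u) [CommRing R] : Prop :=
  ∃ s : Finset R, ∀ x : R, ∃ c : R → R, x = ∑ y ∈ s, c y ^ p * y

/-- `c` is a co-test element: `c ∈ R°` and `M_* = M_*[c, 1]` for every `R`-module `M`. -/
def IsCoTestElement (p : ℕ) (R : Type u) [CommRing R] (c : R) : Prop :=
  c ∈ RCirc R ∧
    ∀ (M : Type v) [AddCommGroup M] [Module R M], tightInterior p R M = tiAux p R M c 0

/-- Strong `F`-regularity: for every `c ∈ R°` some `R`-linear `φ : {}^e R → R` sends `{}^e c`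
to `1`. -/
def StronglyFRegular (p : ℕ) (R : Type u) [CommRing R] : Prop :=
  ∀ c ∈ RCirc R, ∃ (e : ℕ) (g : R →+ R), IsFrobSemilinear p e R g ∧ g c = 1

/-- `R` is `F`-coregular if `M_* = M` for every `R`-module `M`. -/
def FCoregular (p : ℕ) (R : Type u) [CommRing R] : Prop :=
  ∀ (M : Type v) [AddCommGroup M] [Module R M], tightInterior p R M = ⊤

/-- `{}^e R`: the ring `R` viewed as an `R`-module via the `e`-th iterate of Frobenius. -/
def FrobAlg (_p _e : ℕ) (R : Type u) : Type u := R

instance (p e : ℕ) (R : Type u) [CommRing R] : AddCommGroup (FrobAlg p e R) :=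
  inferInstanceAs (AddCommGroup R)

noncomputable instance (p e : ℕ) (R : Type u) [CommRing R] [ExpChar R p] :
    Module R (FrobAlg p e R) :=
  Module.compHom R (iterateFrobenius R p e)

/-- The tight closure of zero in `N`: those `z` such that for some `c ∈ R°`,
`{}^e c ⊗ z = 0` in `{}^e R ⊗_R N` for all `e ≥ 0`. -/
def zeroTC (p : ℕ) (R : Type u) [CommRing R] [Fact p.Prime] [CharP R p]
    (N : Type v) [AddCommGroup N] [Module R N] : Set N :=
  {z | ∃ c ∈ RCirc R, ∀ e : ℕ,
    ((show FrobAlg p e R from c) ⊗ₜ[R] z : TensorProduct R (FrobAlg p e R) N) = 0}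

/-- The big test ideal `τ_b(R) = ⋂_N Ann_R (0*_N)`. -/
def bigTestIdeal (p : ℕ) (R : Type u) [CommRing R] [Fact p.Prime] [CharP R p] : Set R :=
  {r | ∀ (N : Type v) [AddCommGroup N] [Module R N], ∀ z ∈ zeroTC p R N, r • z = 0}

/-!
Each summand lies in `M_*`: an `R/𝔭`-linear map `{}^e(R/𝔭) → (0 :_M 𝔭)` is also `R`-linear from
`{}^e R`, and an element of `R°` stays nonzero modulo the minimal prime `𝔭`.

Conversely, each `R/𝔭` is an F-finite Noetherian domain, and such a domain `D` has `D_* ≠ 0`: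
F-finiteness gives `τ ≠ 0` with `τ^p x ∈ I₁(x)^p` for all `x`, where `I_e(x)` is the ideal of values
`φ({}^e x)`; after inverting `τ` the ideals `I_e(c)` stabilise to an idempotent, hence unit, ideal,
so `τ^k ∈ I_e(c)` for some `k`, and base-`p` reduction of exponents moves `τ^k` to `τ^{3p}` at
arbitrarily high `e`. Choose `d_𝔭` in all minimal primes but `𝔭`, a lift `s_𝔭` of a nonzero
element of `(R/𝔭)_*`, and `e'` with `a^{p^{e'}} = 0` for all nilpotent `a`; then
`c = Σ_𝔭 (d_𝔭 s_𝔭)^{p^{e'}} ∈ R°`. For `g : {}^e R → M` with `e ≥ e'`, the map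
`z ↦ g((d_𝔭 z)^{p^{e'}})` kills `𝔭`, so it factors through `{}^{e-e'}(R/𝔭) → (0 :_M 𝔭)`, which
carries `s_𝔭` into `(0 :_M 𝔭)_*`. Thus `M_* ⊆ M_*[c, p^{e'}]` lies in the sum.
-/

section Semilinear

variable {p : ℕ} {R : Type u} [CommRing R] {M : Type v} {N : Type w}
  [AddCommGroup M] [Module R M] [AddCommGroup N] [Module R N]

namespace IsFrobSemilinear

theorem comp {L : Type*} [AddCommGroup L] [Module R L] {e ε : ℕ} {g : L →+ M} {φ : M →+ N}
    (hg : IsFrobSemilinear p e R g) (hφ : IsFrobSemilinear p ε R φ) :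
    IsFrobSemilinear p (e + ε) R (φ.comp g) := fun r x => by
  rw [AddMonoidHom.comp_apply, AddMonoidHom.comp_apply, pow_add, pow_mul', hg, hφ]

theorem smul {e : ℕ} {g : M →+ N} (hg : IsFrobSemilinear p e R g) (a : R) :
    IsFrobSemilinear p e R (a • g) := fun r x => by
  rw [AddMonoidHom.smul_apply, AddMonoidHom.smul_apply, hg, smul_comm]

theorem add {e : ℕ} {g g' : M →+ N} (hg : IsFrobSemilinear p e R g)
    (hg' : IsFrobSemilinear p e R g') : IsFrobSemilinear p e R (g + g') := fun r x => by
  rw [AddMonoidHom.add_apply, AddMonoidHom.add_apply, hg, hg', smul_add]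

theorem comp_mulLeft {e : ℕ} {g : R →+ M} (hg : IsFrobSemilinear p e R g) (d : R) :
    IsFrobSemilinear p e R (g.comp (AddMonoidHom.mulLeft d)) := fun r x => by
  simp only [AddMonoidHom.comp_apply, AddMonoidHom.coe_mulLeft, smul_eq_mul, mul_left_comm d]
  exact hg r (d * x)

theorem comp_iterateFrobenius [ExpChar R p] {ε e' : ℕ} {g : R →+ M}
    (hg : IsFrobSemilinear p (ε + e') R g) :
    IsFrobSemilinear p ε R (g.comp (iterateFrobenius R p e').toAddMonoidHom) := fun r x => by
  simp only [AddMonoidHom.comp_apply, RingHom.toAddMonoidHom_eq_coe, AddMonoidHom.coe_coe,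
    iterateFrobenius_def, smul_eq_mul, mul_pow, ← pow_mul, ← pow_add]
  exact hg r _

theorem map_mem_tiAux {ε : ℕ} {φ : M →+ N} (hφ : IsFrobSemilinear p ε R φ) {c : R} {e₀ : ℕ}
    {x : M} (hx : x ∈ tiAux p R M c e₀) : φ x ∈ tiAux p R N c e₀ := by
  suffices ∀ r : R, φ (r • x) ∈ tiAux p R N c e₀ by simpa using this 1
  induction hx using Submodule.span_induction with
  | mem y hy =>
    obtain ⟨e, he, g, hg, rfl⟩ := hy
    exact fun r => Submodule.subset_span
      ⟨e + ε, he.trans (Nat.le_add_right e ε), φ.comp (r • g), (hg.smul r).comp hφ, rfl⟩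
  | zero => simp
  | add y z _ _ hy hz => exact fun r => by rw [smul_add, map_add]; exact add_mem (hy r) (hz r)
  | smul a y _ hy => exact fun r => by rw [smul_smul]; exact hy (r * a)

end IsFrobSemilinear

theorem mem_tightInterior_iff {x : M} :
    x ∈ tightInterior p R M ↔ ∀ c ∈ RCirc R, ∀ e₀ : ℕ, x ∈ tiAux p R M c e₀ := by
  simp [tightInterior, Submodule.mem_iInf]

theorem IsFrobSemilinear.map_mem_tightInterior {ε : ℕ} {φ : M →+ N}
    (hφ : IsFrobSemilinear p ε R φ) {x : M} (hx : x ∈ tightInterior p R M) :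
    φ x ∈ tightInterior p R N :=
  mem_tightInterior_iff.mpr fun c hc e₀ => hφ.map_mem_tiAux (mem_tightInterior_iff.mp hx c hc e₀)

end Semilinear

section FrobEvalIdeal

variable (p : ℕ) (R : Type u) [CommRing R]

/-- The ideal `{φ({}^e c) : φ ∈ Hom_R({}^e R, R)}`. -/
def frobEvalIdeal (e : ℕ) (c : R) : Ideal R where
  carrier := {v | ∃ g : R →+ R, IsFrobSemilinear p e R g ∧ g c = v}
  zero_mem' := ⟨0, fun r x => by simp, rfl⟩
  add_mem' := by
    rintro _ _ ⟨g, hg, rfl⟩ ⟨g', hg', rfl⟩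
    exact ⟨g + g', hg.add hg', rfl⟩
  smul_mem' := by
    rintro a _ ⟨g, hg, rfl⟩
    exact ⟨a • g, hg.smul a, rfl⟩

variable {p R}

theorem IsFrobSemilinear.apply_mem_frobEvalIdeal {e : ℕ} {g : R →+ R}
    (hg : IsFrobSemilinear p e R g) (c : R) : g c ∈ frobEvalIdeal p R e c :=
  ⟨g, hg, rfl⟩

theorem self_mem_frobEvalIdeal_zero (c : R) : c ∈ frobEvalIdeal p R 0 c :=
  IsFrobSemilinear.apply_mem_frobEvalIdeal (g := AddMonoidHom.id R) (fun r x => by simp) c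

theorem frobEvalIdeal_le_of_mem {e ε : ℕ} {c v : R} (hv : v ∈ frobEvalIdeal p R e c) :
    frobEvalIdeal p R ε v ≤ frobEvalIdeal p R (e + ε) c := by
  obtain ⟨g, hg, rfl⟩ := hv
  rintro _ ⟨g', hg', rfl⟩
  exact ⟨g'.comp g, hg.comp hg', rfl⟩

theorem mul_mem_frobEvalIdeal {e : ℕ} {b v : R} (hv : v ∈ frobEvalIdeal p R e b) (a : R) :
    a * v ∈ frobEvalIdeal p R e (a ^ p ^ e * b) := by
  obtain ⟨g, hg, rfl⟩ := hv
  exact ⟨g, hg, hg a b⟩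

theorem frobEvalIdeal_le_tiAux {e e₀ : ℕ} (he : e₀ ≤ e) (c : R) :
    frobEvalIdeal p R e c ≤ tiAux p R R c e₀ := by
  rintro _ ⟨g, hg, rfl⟩
  exact Submodule.subset_span ⟨e, he, g, hg, rfl⟩

private theorem div_add_add_mod_le {k n : ℕ} (hp : 2 ≤ p) (hk : k ≤ n + 1 + 3 * p) :
    k / p + p + k % p ≤ n + 3 * p := by
  have hqr := Nat.div_add_mod k p
  have hr : k % p < p := Nat.mod_lt k (by omega)
  rcases Nat.lt_or_ge (k / p) 4 with hq | hq <;> nlinarith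

/-- Writing `k = p q + r`, a map sending `τ^r ↦ τ^{p + r}` sends `τ^k ↦ τ^{q + p + r}`; iterating
this pushes every exponent down to at most `3p`. -/
theorem pow_mem_frobEvalIdeal_pow {τ : R} (hp : 2 ≤ p)
    (hτ : ∀ x : R, τ ^ p * x ∈ frobEvalIdeal p R 1 x) :
    ∀ n k : ℕ, k ≤ n + 3 * p → τ ^ (3 * p) ∈ frobEvalIdeal p R n (τ ^ k) := by
  intro n
  induction n with
  | zero =>
    intro k hk
    rw [show 3 * p = 3 * p - k + k by omega, pow_add]
    exact Ideal.mul_mem_left _ _ (self_mem_frobEvalIdeal_zero _)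
  | succ n ih =>
    intro k hk
    have hstep : τ ^ (k / p + p + k % p) ∈ frobEvalIdeal p R 1 (τ ^ k) := by
      have h := mul_mem_frobEvalIdeal (hτ (τ ^ (k % p))) (τ ^ (k / p))
      rwa [← pow_add, ← pow_add, ← pow_mul, ← pow_add, pow_one, mul_comm,
        Nat.div_add_mod, ← add_assoc] at h
    rw [add_comm n 1]
    exact frobEvalIdeal_le_of_mem hstep (ih _ (div_add_add_mod_le hp (by omega)))

end FrobEvalIdeal

section Domain

variable {p : ℕ} {D : Type u} [CommRing D] [IsDomain D]

theorem mem_RCirc_iff_ne_zero {c : D} : c ∈ RCirc D ↔ c ≠ 0 := by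
  simp [RCirc, IsDomain.minimalPrimes_eq_singleton_bot]

/-- In `D[1/τ]` the ideals `I_e(c)` increase with `e` and, once they stabilise, are idempotent;
a nonzero finitely generated idempotent ideal of a domain is the unit ideal. -/
theorem exists_pow_mem_frobEvalIdeal [IsNoetherianRing D] {τ : D} (hτ : τ ≠ 0)
    (hτI : ∀ x : D, τ ^ p * x ∈ frobEvalIdeal p D 1 x ^ 2) {c : D} (hc : c ≠ 0) :
    ∃ e k : ℕ, τ ^ k ∈ frobEvalIdeal p D e c := by
  let L := Localization.Away τ
  have hpow : Submonoid.powers τ ≤ nonZeroDivisors D :=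
    powers_le_nonZeroDivisors_of_noZeroDivisors hτ
  have : IsDomain L := IsLocalization.isDomain_of_le_nonZeroDivisors L hpow
  have : IsNoetherianRing L := IsLocalization.isNoetherianRing (Submonoid.powers τ) L ‹_›
  let J : ℕ → Ideal L := fun e => (frobEvalIdeal p D e c).map (algebraMap D L)
  have hunit : IsUnit (algebraMap D L (τ ^ p)) := by
    rw [map_pow]; exact (IsLocalization.Away.algebraMap_isUnit τ).pow p
  have hstep : ∀ e, J e ≤ J (e + 1) ^ 2 := by
    intro e
    refine Ideal.map_le_iff_le_comap.mpr fun w hw => ?_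
    have h : τ ^ p * w ∈ frobEvalIdeal p D (e + 1) c ^ 2 :=
      Ideal.pow_right_mono (frobEvalIdeal_le_of_mem hw) 2 (hτI w)
    have h' := Ideal.mem_map_of_mem (algebraMap D L) h
    rw [Ideal.map_pow, map_mul] at h'
    exact (Ideal.unit_mul_mem_iff_mem _ hunit).mp h'
  have hmono : Monotone J :=
    monotone_nat_of_le_succ fun e => (hstep e).trans (Ideal.pow_le_self two_ne_zero)
  obtain ⟨n, hn⟩ := monotone_stabilizes_iff_noetherian.mpr inferInstance ⟨J, hmono⟩
  have hidem : IsIdempotentElem (J n) := by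
    have h : J (n + 1) = J n := (hn (n + 1) n.le_succ).symm
    exact le_antisymm Ideal.mul_le_left (by simpa only [h, sq] using hstep n)
  have hcJ : algebraMap D L c ∈ J n :=
    hmono n.zero_le (Ideal.mem_map_of_mem _ (self_mem_frobEvalIdeal_zero c))
  rcases (Ideal.isIdempotentElem_iff_eq_bot_or_top _ (IsNoetherian.noetherian _)).mp hidem
    with hbot | htop
  · rw [hbot, Ideal.mem_bot, map_eq_zero_iff _ (IsLocalization.injective L hpow)] at hcJ
    exact (hc hcJ).elim
  · have hmeet := (IsLocalization.map_algebraMap_ne_top_iff_disjoint (Submonoid.powers τ) L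
      (frobEvalIdeal p D n c)).not.mp (not_not.mpr htop)
    obtain ⟨_, ⟨k, rfl⟩, hk⟩ := Set.not_disjoint_iff.mp hmeet
    exact ⟨n, k, hk⟩

end Domain

theorem AddMonoidHom.exists_lift_of_forall_mem_range {A B C : Type*} [AddGroup A] [AddGroup B]
    [AddGroup C] {i : A →+ B} (hi : Function.Injective i) (ℓ : C →+ B)
    (h : ∀ x, ℓ x ∈ i.range) : ∃ f : C →+ A, ∀ x, i (f x) = ℓ x :=
  ⟨(AddMonoidHom.ofInjective hi).symm.toAddMonoidHom.comp (ℓ.codRestrict i.range h),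
    fun x => by simp⟩

section FFinite

variable {p : ℕ} [Fact p.Prime]

theorem FFinite.of_surjective {A : Type u} {B : Type w} [CommRing A] [CommRing B] [CharP B p]
    (f : A →+* B) (hf : Function.Surjective f) (hA : FFinite p A) : FFinite p B := by
  classical
  obtain ⟨s, hs⟩ := hA
  refine ⟨s.image f, fun x => ?_⟩
  obtain ⟨a, rfl⟩ := hf x
  obtain ⟨c, hc⟩ := hs a
  refine ⟨fun z => f (∑ y ∈ s with f y = z, c y), ?_⟩
  rw [hc, map_sum]
  refine (Finset.sum_image' _ fun y _ => ?_).symm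
  dsimp only
  rw [map_sum, sum_pow_char, Finset.sum_mul]
  refine Finset.sum_congr rfl fun j hj => ?_
  rw [map_mul, map_pow, (Finset.mem_filter.mp hj).2]

variable {D : Type u} [CommRing D] [IsDomain D]
  {K : Type*} [Field K] [Algebra D K] [IsFractionRing D K]

theorem exists_sum_pow_mul_eq_of_fractionRing {s : Finset D}
    (hs : ∀ x : D, ∃ c : D → D, x = ∑ y ∈ s, c y ^ p * y) (ξ : K) :
    ∃ a : s → K, ξ = ∑ y : s, a y ^ p * algebraMap D K y := by
  have hp : p.Prime := Fact.out
  obtain ⟨u, b, hb, rfl⟩ := IsFractionRing.div_surjective (A := D) ξ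
  have hb0 : algebraMap D K b ≠ 0 :=
    IsFractionRing.to_map_ne_zero_of_mem_nonZeroDivisors hb
  obtain ⟨c, hc⟩ := hs (u * b ^ (p - 1))
  refine ⟨fun y => algebraMap D K (c y) / algebraMap D K b, ?_⟩
  have hcK : algebraMap D K u * algebraMap D K b ^ (p - 1) =
      ∑ y ∈ s, algebraMap D K (c y) ^ p * algebraMap D K y := by
    simpa using congrArg (algebraMap D K) hc
  simp only [div_pow, div_mul_eq_mul_div, ← Finset.sum_div, Finset.sum_coe_sort s
    (fun y => algebraMap D K (c y) ^ p * algebraMap D K y), ← hcK]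
  have hbp : algebraMap D K b ^ p = algebraMap D K b ^ (p - 1) * algebraMap D K b := by
    rw [← pow_succ, Nat.sub_add_cancel hp.one_le]
  rw [eq_div_iff (pow_ne_zero p hb0), div_mul_eq_mul_div, hbp, ← mul_assoc, mul_div_assoc,
    div_self hb0, mul_one]

theorem exists_frobenius_coordinates [CharP D p] {s : Finset D}
    (hs : ∀ x : D, ∃ c : D → D, x = ∑ y ∈ s, c y ^ p * y) :
    ∃ ℓ : s → K →+ K, (∀ y (a x : K), ℓ y (a ^ p * x) = a * ℓ y x) ∧
      ∀ x : K, x = ∑ y : s, ℓ y x ^ p * algebraMap D K y := by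
  have : CharP K p := IsFractionRing.charP_of_isFractionRing D p
  have hsmul : ∀ a x : K, (a • (show FrobAlg p 1 K from x) : FrobAlg p 1 K) =
      show FrobAlg p 1 K from a ^ p * x := fun a x => by
    show iterateFrobenius K p 1 a * x = a ^ p * x
    rw [iterateFrobenius_def, pow_one]
  let f := Fintype.linearCombination K fun y : s => (show FrobAlg p 1 K from algebraMap D K y)
  have hf : ∀ a : s → K, f a = show FrobAlg p 1 K from ∑ y : s, a y ^ p * algebraMap D K y :=
    fun a => by
      rw [Fintype.linearCombination_apply]
      exact Finset.sum_congr rfl fun y _ => hsmul _ _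
  obtain ⟨g, hg⟩ := f.exists_rightInverse_of_surjective <| LinearMap.range_eq_top.mpr fun ξ => by
    obtain ⟨a, ha⟩ := exists_sum_pow_mul_eq_of_fractionRing hs (show K from ξ)
    exact ⟨a, (hf a).trans ha.symm⟩
  refine ⟨fun y => ((LinearMap.proj y).comp g).toAddMonoidHom, fun y a x => ?_, fun x => ?_⟩
  · show g (show FrobAlg p 1 K from a ^ p * x) y = a * g x y
    rw [← hsmul, map_smul]
    rfl
  · exact ((hf (g x)).symm.trans (LinearMap.congr_fun hg x)).symm

theorem FFinite.exists_pow_mul_mem_frobEvalIdeal_pow [CharP D p] (hff : FFinite p D) :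
    ∃ τ : D, τ ≠ 0 ∧ ∀ x : D, τ ^ p * x ∈ frobEvalIdeal p D 1 x ^ p := by
  obtain ⟨s, hs⟩ := hff
  let ι := algebraMap D (FractionRing D)
  have hι : Function.Injective ι := IsFractionRing.injective D (FractionRing D)
  obtain ⟨ℓ, hℓ, hsum⟩ := exists_frobenius_coordinates (K := FractionRing D) hs
  have hcomb : ∀ y x, ∃ c : D → D, ℓ y (ι x) = ∑ y' : s, ι (c y') * ℓ y (ι y') := by
    intro y x
    obtain ⟨c, hc⟩ := hs x
    refine ⟨c, ?_⟩
    rw [hc, map_sum, map_sum, ← Finset.sum_coe_sort s]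
    refine Finset.sum_congr rfl fun y' _ => ?_
    rw [map_mul, map_pow, hℓ]
  -- a common denominator for the finitely many values `ℓ y (ι y')` clears all values of `ℓ`
  obtain ⟨d, hd⟩ := IsLocalization.exist_integer_multiples (nonZeroDivisors D)
    (Finset.univ : Finset (s × s)) fun yy => ℓ yy.1 (ι yy.2)
  have hint : ∀ y x, ι d * ℓ y (ι x) ∈ ι.toAddMonoidHom.range := by
    intro y x
    obtain ⟨c, hc⟩ := hcomb y x
    have : ι d * ℓ y (ι x) ∈ ι.rangeS := by
      rw [hc, Finset.mul_sum]
      refine sum_mem fun y' _ => ?_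
      rw [mul_left_comm]
      have hdy := hd (y, y') (Finset.mem_univ _)
      rw [Algebra.smul_def] at hdy
      exact mul_mem ⟨c y', rfl⟩ hdy
    obtain ⟨z, hz⟩ := this
    exact ⟨z, hz⟩
  choose f hf using fun y => AddMonoidHom.exists_lift_of_forall_mem_range hι
    ((AddMonoidHom.mulLeft (ι d)).comp ((ℓ y).comp ι.toAddMonoidHom)) (hint y)
  replace hf : ∀ y x, ι (f y x) = ι d * ℓ y (ι x) := hf
  refine ⟨d, nonZeroDivisors.ne_zero d.2, fun x => ?_⟩
  have hsl : ∀ y, IsFrobSemilinear p 1 D (f y) := fun y r z => hι <| by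
    rw [smul_eq_mul, smul_eq_mul, pow_one, hf, map_mul ι, map_mul ι, map_pow, hℓ, hf,
      mul_left_comm]
  have hx : (d : D) ^ p * x = ∑ y : s, f y x ^ p * y := hι <| by
    rw [map_mul, map_pow, hsum (ι x), Finset.mul_sum, map_sum]
    refine Finset.sum_congr rfl fun y _ => ?_
    rw [map_mul, map_pow, hf, mul_pow, mul_assoc]
  rw [hx]
  exact sum_mem fun y _ =>
    Ideal.mul_mem_right _ _ (Ideal.pow_mem_pow ((hsl y).apply_mem_frobEvalIdeal x) p)

theorem FFinite.exists_ne_zero_mem_tightInterior [CharP D p] [IsNoetherianRing D]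
    (hff : FFinite p D) : ∃ t : D, t ≠ 0 ∧ t ∈ tightInterior p D D := by
  have hp : p.Prime := Fact.out
  obtain ⟨τ, hτ, hτI⟩ := hff.exists_pow_mul_mem_frobEvalIdeal_pow
  refine ⟨τ ^ (3 * p), pow_ne_zero _ hτ, mem_tightInterior_iff.mpr fun c hc E => ?_⟩
  obtain ⟨e, k, hk⟩ := exists_pow_mem_frobEvalIdeal hτ
    (fun x => Ideal.pow_le_pow_right hp.two_le (hτI x)) (mem_RCirc_iff_ne_zero.mp hc)
  have h := pow_mem_frobEvalIdeal_pow hp.two_le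
    (fun x => Ideal.pow_le_self hp.ne_zero (hτI x)) (E + k) k (by omega)
  exact frobEvalIdeal_le_tiAux (by omega) c (frobEvalIdeal_le_of_mem hk h)

end FFinite

section Quotient

variable {p : ℕ} {R : Type u} [CommRing R] {M : Type v} [AddCommGroup M] [Module R M]

theorem charP_quotient_of_ne_top [Fact p.Prime] [CharP R p] {I : Ideal R} (hI : I ≠ ⊤) :
    CharP (R ⧸ I) p := by
  have : Nontrivial (R ⧸ I) := Ideal.Quotient.nontrivial_iff.mpr hI
  rw [CharP.charP_iff_prime_eq_zero Fact.out, ← map_natCast (Ideal.Quotient.mk I),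
    CharP.cast_eq_zero, map_zero]

theorem exists_not_mem_mk_mem_tightInterior [Fact p.Prime] [CharP R p] [IsNoetherianRing R]
    (hred : FFinite p (R ⧸ nilradical R)) (𝔭 : Ideal R) [𝔭.IsPrime] :
    ∃ s ∉ 𝔭, Ideal.Quotient.mk 𝔭 s ∈ tightInterior p (R ⧸ 𝔭) (R ⧸ 𝔭) := by
  have : CharP (R ⧸ 𝔭) p := charP_quotient_of_ne_top Ideal.IsPrime.ne_top'
  obtain ⟨t, ht0, ht⟩ := (hred.of_surjective _
    (Ideal.Quotient.factor_surjective (nilradical_le_prime 𝔭))).exists_ne_zero_mem_tightInterior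
  obtain ⟨s, rfl⟩ := Ideal.Quotient.mk_surjective t
  exact ⟨s, fun hs => ht0 (Ideal.Quotient.eq_zero_iff_mem.mpr hs), ht⟩

end Quotient

section MinimalPrimes

variable {p : ℕ} {R : Type u} [CommRing R] {M : Type v} [AddCommGroup M] [Module R M]

variable (p R M) in
/-- `(0 :_M 𝔭)_{*(R/𝔭)}`, as an `R`-submodule of `M`. -/
def torsionBySetTightInterior (𝔭 : Ideal R) : Submodule R M :=
  Submodule.span R (Subtype.val '' (tightInterior p (R ⧸ 𝔭) (Submodule.torsionBySet R M ↑𝔭) :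
    Set (Submodule.torsionBySet R M ↑𝔭)))

theorem coe_mem_tiAux_of_mem_quotient {𝔭 : Ideal R} {c : R} {e₀ : ℕ}
    {x : Submodule.torsionBySet R M 𝔭}
    (hx : x ∈ tiAux p (R ⧸ 𝔭) (Submodule.torsionBySet R M 𝔭) (Ideal.Quotient.mk 𝔭 c) e₀) :
    (x : M) ∈ tiAux p R M c e₀ := by
  induction hx using Submodule.span_induction with
  | mem y hy =>
    obtain ⟨e, he, h, hh, rfl⟩ := hy
    refine Submodule.subset_span ⟨e, he, (Submodule.torsionBySet R M 𝔭).subtype.toAddMonoidHom.comp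
      (h.comp (Ideal.Quotient.mk 𝔭).toAddMonoidHom), fun r z => ?_, rfl⟩
    simp only [AddMonoidHom.comp_apply, RingHom.toAddMonoidHom_eq_coe, AddMonoidHom.coe_coe,
      LinearMap.toAddMonoidHom_coe, Submodule.subtype_apply, smul_eq_mul, map_mul, map_pow]
    rw [← smul_eq_mul, hh, Submodule.torsionBySet.mk_smul, Submodule.coe_smul]
  | zero => simp
  | add a b _ _ ha hb => exact add_mem ha hb
  | smul a y _ hy =>
    obtain ⟨r, rfl⟩ := Ideal.Quotient.mk_surjective a
    rw [Submodule.torsionBySet.mk_smul, Submodule.coe_smul]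
    exact Submodule.smul_mem _ r hy

theorem torsionBySetTightInterior_le {𝔭 : Ideal R} (h𝔭 : 𝔭 ∈ minimalPrimes R) :
    torsionBySetTightInterior p R M 𝔭 ≤ tightInterior p R M := by
  have := h𝔭.1.1
  refine Submodule.span_le.mpr ?_
  rintro _ ⟨x, hx, rfl⟩
  refine mem_tightInterior_iff.mpr fun c hc e₀ => coe_mem_tiAux_of_mem_quotient ?_
  refine mem_tightInterior_iff.mp hx _ (mem_RCirc_iff_ne_zero.mpr fun h => ?_) e₀
  exact hc 𝔭 h𝔭 (Ideal.Quotient.eq_zero_iff_mem.mp h)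

theorem IsFrobSemilinear.exists_quotient_lift {𝔭 : Ideal R} {ε : ℕ} {φ : R →+ M} (hp : 0 < p)
    (hφ : IsFrobSemilinear p ε R φ) (h𝔭 : ∀ z ∈ 𝔭, φ z = 0) :
    ∃ Φ : R ⧸ 𝔭 →+ Submodule.torsionBySet R M 𝔭, IsFrobSemilinear p ε (R ⧸ 𝔭) Φ ∧
      ∀ z, (Φ (Ideal.Quotient.mk 𝔭 z) : M) = φ z := by
  have hmem : ∀ z, φ z ∈ Submodule.torsionBySet R M 𝔭 := fun z => by
    rw [Submodule.mem_torsionBySet_iff]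
    rintro ⟨a, ha⟩
    rw [← hφ, smul_eq_mul]
    exact h𝔭 _ (Ideal.mul_mem_right _ _ (Ideal.pow_mem_of_mem _ ha _ (pow_pos hp ε)))
  refine ⟨QuotientAddGroup.lift 𝔭.toAddSubgroup (φ.codRestrict _ hmem)
    fun z hz => Subtype.ext (h𝔭 z hz), fun r z => ?_, fun z => rfl⟩
  obtain ⟨r, rfl⟩ := Ideal.Quotient.mk_surjective r
  obtain ⟨z, rfl⟩ := Ideal.Quotient.mk_surjective z
  apply Subtype.ext
  rw [smul_eq_mul, ← map_pow, ← map_mul, Submodule.torsionBySet.mk_smul]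
  exact hφ r z

theorem exists_pow_pow_eq_zero_of_mem_nilradical (R : Type u) [CommRing R] [IsNoetherianRing R]
    (hp : 1 < p) : ∃ e : ℕ, ∀ a ∈ nilradical R, a ^ p ^ e = 0 := by
  obtain ⟨k, hk⟩ := IsNoetherianRing.isNilpotent_nilradical R
  refine ⟨k, fun a ha => pow_eq_zero_of_le (Nat.lt_pow_self hp).le ?_⟩
  simpa [hk] using Ideal.pow_mem_pow ha k

theorem mul_mem_nilradical_of_mem_minimalPrimes {𝔭 : Ideal R} {d z : R}
    (hd : ∀ 𝔮 ∈ minimalPrimes R, 𝔮 ≠ 𝔭 → d ∈ 𝔮) (hz : z ∈ 𝔭) : d * z ∈ nilradical R := by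
  rw [nilradical, ← Ideal.sInf_minimalPrimes]
  refine Submodule.mem_sInf.mpr fun 𝔮 h𝔮 => ?_
  by_cases h : 𝔮 = 𝔭
  · exact h ▸ Ideal.mul_mem_left _ _ hz
  · exact Ideal.mul_mem_right _ _ (hd 𝔮 h𝔮 h)

theorem exists_not_mem_forall_mem_minimalPrimes [IsNoetherianRing R] {𝔭 : Ideal R}
    (h𝔭 : 𝔭 ∈ minimalPrimes R) : ∃ d ∉ 𝔭, ∀ 𝔮 ∈ minimalPrimes R, 𝔮 ≠ 𝔭 → d ∈ 𝔮 := by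
  classical
  have hfin := minimalPrimes.finite_of_isNoetherianRing R
  have hnle : ¬ (hfin.toFinset.erase 𝔭).inf id ≤ 𝔭 := by
    rw [h𝔭.1.1.inf_le']
    rintro ⟨𝔮, h𝔮, h𝔮𝔭⟩
    rw [Finset.mem_erase, Set.Finite.mem_toFinset] at h𝔮
    exact h𝔮.1 (le_antisymm h𝔮𝔭 (h𝔭.2 h𝔮.2.1 h𝔮𝔭))
  obtain ⟨d, hd, hd𝔭⟩ := SetLike.not_le_iff_exists.mp hnle
  refine ⟨d, hd𝔭, fun 𝔮 h𝔮 hne => Submodule.mem_finsetInf.mp hd 𝔮 ?_⟩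
  simp [hne, h𝔮]

theorem apply_pow_mem_torsionBySetTightInterior [Fact p.Prime] [CharP R p] {𝔭 : Ideal R}
    {e' e : ℕ} (he' : ∀ a ∈ nilradical R, a ^ p ^ e' = 0) (he : e' ≤ e) {g : R →+ M}
    (hg : IsFrobSemilinear p e R g) {d s : R} (hd : ∀ z ∈ 𝔭, d * z ∈ nilradical R)
    (hs : Ideal.Quotient.mk 𝔭 s ∈ tightInterior p (R ⧸ 𝔭) (R ⧸ 𝔭)) :
    g ((d * s) ^ p ^ e') ∈ torsionBySetTightInterior p R M 𝔭 := by
  obtain ⟨ε, rfl⟩ := Nat.exists_eq_add_of_le' he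
  -- `z ↦ g ((d z) ^ p ^ e')` kills `𝔭`, since `d 𝔭` consists of nilpotents
  obtain ⟨Φ, hΦ, hΦφ⟩ := (hg.comp_iterateFrobenius.comp_mulLeft d).exists_quotient_lift
    (Fact.out : p.Prime).pos fun z hz => by
      simp [iterateFrobenius_def, he' _ (hd z hz)]
  refine Submodule.subset_span ⟨_, hΦ.map_mem_tightInterior hs, ?_⟩
  simp [hΦφ, iterateFrobenius_def]

end MinimalPrimes

theorem tightInterior_le_iSup_torsionBySetTightInterior {p : ℕ} [Fact p.Prime] {R : Type u}
    [CommRing R] [IsNoetherianRing R] [CharP R p] (hred : FFinite p (R ⧸ nilradical R))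
    (M : Type v) [AddCommGroup M] [Module R M] :
    tightInterior p R M ≤ ⨆ 𝔭 ∈ minimalPrimes R, torsionBySetTightInterior p R M 𝔭 := by
  have hp : p.Prime := Fact.out
  have : Fintype (minimalPrimes R) := (minimalPrimes.finite_of_isNoetherianRing R).fintype
  obtain ⟨e', he'⟩ := exists_pow_pow_eq_zero_of_mem_nilradical (p := p) R hp.one_lt
  choose d hd𝔭 hd using fun 𝔭 : minimalPrimes R => exists_not_mem_forall_mem_minimalPrimes 𝔭.2
  choose s hs𝔭 hs using fun 𝔭 : minimalPrimes R =>
    have := 𝔭.2.1.1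
    exists_not_mem_mk_mem_tightInterior hred 𝔭.1
  have hc : ∑ 𝔭, (d 𝔭 * s 𝔭) ^ p ^ e' ∈ RCirc R := by
    intro P hP hcP
    have hPprime := hP.1.1
    let P' : minimalPrimes R := ⟨P, hP⟩
    have hrest : ∑ 𝔮 ∈ Finset.univ.erase P', (d 𝔮 * s 𝔮) ^ p ^ e' ∈ P :=
      sum_mem fun 𝔮 h𝔮 => Ideal.pow_mem_of_mem _ (Ideal.mul_mem_right _ _
        (hd 𝔮 P hP fun h => Finset.ne_of_mem_erase h𝔮 (Subtype.ext h.symm))) _ (pow_pos hp.pos _)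
    rw [← Finset.add_sum_erase _ _ (Finset.mem_univ P'), Submodule.add_mem_iff_left _ hrest]
      at hcP
    rcases hPprime.mem_or_mem (hPprime.mem_of_pow_mem _ hcP) with h | h
    exacts [hd𝔭 P' h, hs𝔭 P' h]
  intro x hx
  refine Submodule.span_le.mpr ?_ (mem_tightInterior_iff.mp hx _ hc e')
  rintro _ ⟨e, he, g, hg, rfl⟩
  rw [SetLike.mem_coe, map_sum]
  exact sum_mem fun 𝔭 _ => Submodule.mem_iSup_of_mem 𝔭.1 <| Submodule.mem_iSup_of_mem 𝔭.2 <|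
    apply_pow_mem_torsionBySetTightInterior he' he hg
      (fun _ hz => mul_mem_nilradical_of_mem_minimalPrimes (hd 𝔭) hz) (hs 𝔭)

/-- Proposition 2.10 (minimal primes): `M_{*R} = Σᵢ (0 :_M 𝔭ᵢ)_{*(R/𝔭ᵢ)}`. -/
theorem tightInterior_eq_sum_minimalPrimes
    (p : ℕ) [Fact p.Prime] (R : Type u) [CommRing R] [IsNoetherianRing R] [CharP R p]
    (hred : FFinite p (R ⧸ nilradical R))
    (M : Type v) [AddCommGroup M] [Module R M] :
    tightInterior p R M =
      ⨆ 𝔭 ∈ minimalPrimes R, Submodule.span R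
        (Subtype.val '' (tightInterior p (R ⧸ 𝔭) (Submodule.torsionBySet R M ↑𝔭) :
          Set (Submodule.torsionBySet R M ↑𝔭))) :=
  le_antisymm (tightInterior_le_iSup_torsionBySetTightInterior hred M)
    (iSup₂_le fun _ h𝔭 => torsionBySetTightInterior_le h𝔭)
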